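/- If μ is a free Q⁺-measure on ℕ, then there is no shift-invariant measure ν with ν ≤_RB μ, and there is no measure ν with ν ≤_RB μ that extends the asymptotic density. -/

import Mathlib

open Filter

/-- A finitely additive probability measure defined on all subsets of `ℕ`. -/
def IsMeasure (μ : Set ℕ → ℝ) : Prop :=
  (∀ A : Set ℕ, 0 ≤ μ A ∧ μ A ≤ 1) ∧ μ Set.univ = 1 ∧
    ∀ A B : Set ℕ, Disjoint A B → μ (A ∪ B) = μ A + μ B

/-- A measure is free if it vanishes on finite sets. -/
def IsFree (μ : Set ℕ → ℝ) : Prop := ∀ A : Set ℕ, A.Finite → μ A = 0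

/-- A function is finite-to-one if all fibers are finite. -/
def FinToOne (f : ℕ → ℕ) : Prop := ∀ n : ℕ, (f ⁻¹' {n}).Finite

/-- Rudin-Blass reducibility: `ν ≤_RB μ` via a finite-to-one map. -/
def RBLe (ν μ : Set ℕ → ℝ) : Prop :=
  ∃ f : ℕ → ℕ, FinToOne f ∧ ∀ A : Set ℕ, μ (f ⁻¹' A) = ν A

/-- Rudin-Keisler reducibility: `ν ≤_RK μ`. -/
def RKLe (ν μ : Set ℕ → ℝ) : Prop :=
  ∃ f : ℕ → ℕ, ∀ A : Set ℕ, μ (f ⁻¹' A) = ν A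

/-- A measure is shift invariant if `μ(A + 1) = μ(A)`. -/
def ShiftInvariant (μ : Set ℕ → ℝ) : Prop :=
  ∀ A : Set ℕ, μ ((fun n => n + 1) '' A) = μ A

/-- A measure extends the asymptotic density. -/
def ExtendsDensity (μ : Set ℕ → ℝ) : Prop :=
  ∀ (A : Set ℕ) (d : ℝ),
    Tendsto (fun n : ℕ => ((A ∩ Set.Iio n).ncard : ℝ) / n) atTop (nhds d) → μ A = d

/-- A partition of `ℕ` indexed by `ℕ`. -/
def IsPartition (A : ℕ → Set ℕ) : Prop :=
  Pairwise (Function.onFun Disjoint A) ∧ (⋃ n, A n) = Set.univ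

/-- A selector of a partition: meets each piece in at most one point. -/
def IsSelector (S : Set ℕ) (A : ℕ → Set ℕ) : Prop :=
  ∀ n : ℕ, (S ∩ A n).Subsingleton

/-- A Q-measure: each partition into finite sets has a selector of full measure. -/
def IsQMeasure (μ : Set ℕ → ℝ) : Prop :=
  ∀ A : ℕ → Set ℕ, IsPartition A → (∀ n, (A n).Finite) →
    ∃ S : Set ℕ, IsSelector S A ∧ μ S = 1

/-- A Q⁺-measure: each partition into finite sets has a selector of positive measure. -/
def IsQPlusMeasure (μ : Set ℕ → ℝ) : Prop :=
  ∀ A : ℕ → Set ℕ, IsPartition A → (∀ n, (A n).Finite) →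
    ∃ S : Set ℕ, IsSelector S A ∧ 0 < μ S

/-- A P-measure: each partition has a pseudo-selector of the largest possible measure. -/
def IsPMeasure (μ : Set ℕ → ℝ) : Prop :=
  ∀ A : ℕ → Set ℕ, IsPartition A →
    ∃ S : Set ℕ, (∀ n, (S ∩ A n).Finite) ∧ μ S = 1 - ∑' n, μ (A n)

/-- A selective measure: each partition has a selector of the largest possible measure. -/
def IsSelectiveMeasure (μ : Set ℕ → ℝ) : Prop :=
  ∀ A : ℕ → Set ℕ, IsPartition A →
    ∃ S : Set ℕ, IsSelector S A ∧ μ S = 1 - ∑' n, μ (A n)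

/-- A non-atomic measure: finite partitions into pieces of arbitrarily small measure. -/
def NonAtomic (μ : Set ℕ → ℝ) : Prop :=
  ∀ ε : ℝ, 0 < ε → ∃ (N : ℕ) (P : Fin N → Set ℕ),
    Pairwise (Function.onFun Disjoint P) ∧ (⋃ i, P i) = Set.univ ∧ ∀ i, μ (P i) < ε

/-- The continuum hypothesis: `2 ^ ℵ₀ = ℵ₁`. -/
def CH : Prop := (2 : Cardinal.{0}) ^ Cardinal.aleph0.{0} = Cardinal.aleph.{0} 1

/-!
If `ν = f[μ]` with `f` finite-to-one, the fibres of `Nat.sqrt ∘ f` partition `ℕ` into finite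
sets, so `μ` gives positive measure to one of their selectors `S`. Its image `T = f '' S` has
positive `ν`-measure and meets every block `[n², (n+1)²)` in at most one point.

Such a `T` has at most `√n + 1` elements below `n`, so it has density `0` and `ν` cannot extend
the asymptotic density. If `ν` is shift invariant, singletons (hence finite sets) are null, as
their translates are disjoint. Split `T` by the parity of the block index: the points of one half
`U` beyond `m²` are more than `m` apart, so `U, U + 1, …, U + (m - 1)` are disjoint up to a finite
set, giving `m * ν U ≤ 1` for every `m`, i.e. `ν U = 0`, and likewise for the other half.
-/

namespace IsMeasure

variable {μ : Set ℕ → ℝ}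

lemma measure_empty (h : IsMeasure μ) : μ ∅ = 0 := by
  have := h.2.2 ∅ ∅ disjoint_bot_left
  simp only [Set.union_self] at this
  linarith

lemma mono (h : IsMeasure μ) {A B : Set ℕ} (hAB : A ⊆ B) : μ A ≤ μ B := by
  have := h.2.2 A (B \ A) Set.disjoint_sdiff_right
  rw [Set.union_sdiff_cancel hAB] at this
  linarith [(h.1 (B \ A)).1]

lemma measure_biUnion_finset (h : IsMeasure μ) {ι : Type*} {s : Finset ι} {g : ι → Set ℕ}
    (hd : (s : Set ι).PairwiseDisjoint g) : μ (⋃ i ∈ s, g i) = ∑ i ∈ s, μ (g i) := by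
  classical
  induction s using Finset.induction_on with
  | empty => simp [h.measure_empty]
  | insert a s ha ih =>
    rw [Finset.coe_insert] at hd
    rw [Finset.set_biUnion_insert, Finset.sum_insert ha, ← ih (hd.subset (Set.subset_insert _ _))]
    refine h.2.2 _ _ (Set.disjoint_iUnion₂_right.2 fun i hi => hd (Set.mem_insert _ _)
      (Set.mem_insert_of_mem _ hi) ?_)
    rintro rfl
    exact ha hi

lemma sum_le_one (h : IsMeasure μ) {ι : Type*} {s : Finset ι} {g : ι → Set ℕ}
    (hd : (s : Set ι).PairwiseDisjoint g) : ∑ i ∈ s, μ (g i) ≤ 1 := by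
  rw [← h.measure_biUnion_finset hd, ← h.2.1]
  exact h.mono (Set.subset_univ _)

lemma measure_eq_zero_of_finite (h : IsMeasure μ) (h0 : ∀ k, μ {k} = 0) {F : Set ℕ}
    (hF : F.Finite) : μ F = 0 := by
  induction F, hF using Set.Finite.induction_on with
  | empty => exact h.measure_empty
  | insert ha _ ih =>
    rw [Set.insert_eq, h.2.2 _ _ (Set.disjoint_singleton_left.2 ha), h0, ih, add_zero]

end IsMeasure

lemma FinToOne.comp {f g : ℕ → ℕ} (hg : FinToOne g) (hf : FinToOne f) : FinToOne (g ∘ f) :=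
  fun n => (hg n).preimage' fun m _ => hf m

lemma finToOne_sqrt : FinToOne Nat.sqrt := fun n =>
  (Set.finite_Iio ((n + 1) * (n + 1))).subset fun x hx => by
    rw [Set.mem_preimage, Set.mem_singleton_iff] at hx
    exact Nat.sqrt_lt.1 (hx ▸ Nat.lt_succ_self n)

lemma isPartition_fiber (g : ℕ → ℕ) : IsPartition fun n => g ⁻¹' {n} :=
  ⟨pairwise_disjoint_fiber g, Set.eq_univ_of_forall fun x => Set.mem_iUnion.2 ⟨g x, rfl⟩⟩

lemma IsQPlusMeasure.exists_injOn_pos {μ : Set ℕ → ℝ} (hQ : IsQPlusMeasure μ) {g : ℕ → ℕ}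
    (hg : FinToOne g) : ∃ S : Set ℕ, Set.InjOn g S ∧ 0 < μ S := by
  obtain ⟨S, hS, hpos⟩ := hQ _ (isPartition_fiber g) hg
  exact ⟨S, fun x hx y hy hxy => hS (g y) ⟨hx, hxy⟩ ⟨hy, rfl⟩, hpos⟩

lemma RBLe.exists_injOn_pos {μ ν : Set ℕ → ℝ} (hνμ : RBLe ν μ) (hμ : IsMeasure μ)
    (hQ : IsQPlusMeasure μ) {g : ℕ → ℕ} (hg : FinToOne g) :
    ∃ T : Set ℕ, Set.InjOn g T ∧ 0 < ν T := by
  obtain ⟨f, hf, hfν⟩ := hνμ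
  obtain ⟨S, hS, hpos⟩ := hQ.exists_injOn_pos (hg.comp hf)
  refine ⟨f '' S, ?_, ?_⟩
  · rintro _ ⟨x, hx, rfl⟩ _ ⟨y, hy, rfl⟩ hxy
    rw [hS hx hy hxy]
  · rw [← hfν]
    exact hpos.trans_le (hμ.mono (Set.subset_preimage_image f S))

lemma nonpos_of_forall_natCast_mul_le_one {c : ℝ} (h : ∀ m : ℕ, m * c ≤ 1) : c ≤ 0 := by
  by_contra! hc
  obtain ⟨m, hm⟩ := exists_nat_gt c⁻¹
  linarith [h m, (inv_lt_iff_one_lt_mul₀ hc).1 hm]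

namespace ShiftInvariant

variable {ν : Set ℕ → ℝ}

lemma measure_image_add (h : ShiftInvariant ν) (i : ℕ) (A : Set ℕ) :
    ν ((· + i) '' A) = ν A := by
  induction i generalizing A with
  | zero => simp
  | succ i ih => rw [← ih A, ← h ((· + i) '' A), Set.image_image]; rfl

lemma natCast_mul_le_one (h : ShiftInvariant ν) (hν : IsMeasure ν) {V : Set ℕ} {m : ℕ}
    (hV : ∀ x ∈ V, ∀ y ∈ V, y < x → y + m ≤ x) : m * ν V ≤ 1 := by
  have hd : (Finset.range m : Set ℕ).PairwiseDisjoint fun i => (· + i) '' V := by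
    intro i hi j hj hij
    rw [Function.onFun, Set.disjoint_left]
    rintro _ ⟨x, hx, rfl⟩ ⟨y, hy, hyx⟩
    simp only [Finset.coe_range, Set.mem_Iio] at hi hj hyx
    rcases lt_trichotomy x y with hlt | rfl | hgt
    · have := hV y hy x hx hlt; omega
    · omega
    · have := hV x hx y hy hgt; omega
  simpa [h.measure_image_add] using hν.sum_le_one hd

lemma measure_singleton (h : ShiftInvariant ν) (hν : IsMeasure ν) (k : ℕ) : ν {k} = 0 := by
  refine le_antisymm (nonpos_of_forall_natCast_mul_le_one fun m => ?_) (hν.1 _).1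
  refine h.natCast_mul_le_one hν ?_
  rintro x hx y hy hlt
  rw [Set.mem_singleton_iff] at hx hy
  omega

lemma measure_eq_zero_of_sqrt_add_two_le (h : ShiftInvariant ν) (hν : IsMeasure ν) {U : Set ℕ}
    (hU : ∀ x ∈ U, ∀ y ∈ U, y < x → Nat.sqrt y + 2 ≤ Nat.sqrt x) : ν U = 0 := by
  refine le_antisymm (nonpos_of_forall_natCast_mul_le_one fun m => ?_) (hν.1 U).1
  set V := U ∩ {y | m ≤ Nat.sqrt y}
  have hfin : (U \ V).Finite := (Set.finite_Iio (m * m)).subset fun y hy =>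
    Nat.sqrt_lt.1 (not_le.1 fun hm => hy.2 ⟨hy.1, hm⟩)
  have hVU : ν V = ν U := by
    have := hν.2.2 V (U \ V) Set.disjoint_sdiff_right
    rwa [Set.union_sdiff_cancel Set.inter_subset_left,
      hν.measure_eq_zero_of_finite (h.measure_singleton hν) hfin, add_zero, eq_comm] at this
  rw [← hVU]
  refine h.natCast_mul_le_one hν fun x hx y hy hyx => ?_
  have hm : m ≤ Nat.sqrt y := hy.2
  have hsq := Nat.mul_self_le_mul_self (hU x hx.1 y hy.1 hyx)
  nlinarith [Nat.lt_succ_sqrt y, Nat.sqrt_le x]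

lemma measure_eq_zero_of_injOn_sqrt (h : ShiftInvariant ν) (hν : IsMeasure ν) {T : Set ℕ}
    (hT : Set.InjOn Nat.sqrt T) : ν T = 0 := by
  have hsplit : ∀ U ⊆ T, (∀ x ∈ U, ∀ y ∈ U, Nat.sqrt x % 2 = Nat.sqrt y % 2) → ν U = 0 :=
    fun U hUT hpar => h.measure_eq_zero_of_sqrt_add_two_le hν fun x hx y hy hyx => by
      have hle := Nat.sqrt_le_sqrt hyx.le
      have hne : Nat.sqrt y ≠ Nat.sqrt x := fun he => hyx.ne (hT (hUT hy) (hUT hx) he)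
      have := hpar x hx y hy
      omega
  set A := T ∩ {x | Nat.sqrt x % 2 = 0}
  have := hν.2.2 A (T \ A) Set.disjoint_sdiff_right
  rwa [Set.union_sdiff_cancel Set.inter_subset_left,
    hsplit A Set.inter_subset_left fun x hx y hy => hx.2.trans hy.2.symm,
    hsplit (T \ A) Set.sdiff_subset fun x hx y hy => ?_, add_zero] at this
  have hx' : Nat.sqrt x % 2 ≠ 0 := fun h0 => hx.2 ⟨hx.1, h0⟩
  have hy' : Nat.sqrt y % 2 ≠ 0 := fun h0 => hy.2 ⟨hy.1, h0⟩
  omega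

end ShiftInvariant

lemma ncard_inter_Iio_le_of_injOn_sqrt {T : Set ℕ} (hT : Set.InjOn Nat.sqrt T) (n : ℕ) :
    (T ∩ Set.Iio n).ncard ≤ Nat.sqrt n + 1 := by
  rw [← Set.ncard_Iic_nat]
  exact Set.ncard_le_ncard_of_injOn Nat.sqrt (fun x hx => Nat.sqrt_le_sqrt hx.2.le)
    (hT.mono Set.inter_subset_left) (Set.finite_Iic _)

lemma tendsto_nat_sqrt_add_one_div :
    Tendsto (fun n : ℕ => ((Nat.sqrt n : ℝ) + 1) / n) atTop (nhds 0) := by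
  have h : Tendsto (fun n : ℕ => 2 * (√(n : ℝ))⁻¹) atTop (nhds 0) := by
    simpa using (tendsto_inv_atTop_zero.comp
      (Real.tendsto_sqrt_atTop.comp tendsto_natCast_atTop_atTop)).const_mul 2
  refine squeeze_zero' (Eventually.of_forall fun n => by positivity) ?_ h
  filter_upwards [eventually_ge_atTop 1] with n hn
  have hn' : (1 : ℝ) ≤ n := by exact_mod_cast hn
  calc ((Nat.sqrt n : ℝ) + 1) / n ≤ 2 * √(n : ℝ) / n := by
        gcongr
        linarith [Real.nat_sqrt_le_real_sqrt (a := n), Real.one_le_sqrt.2 hn']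
    _ = 2 * (√(n : ℝ))⁻¹ := by rw [mul_div_assoc, Real.sqrt_div_self', one_div]

lemma tendsto_ncard_inter_Iio_div_of_injOn_sqrt {T : Set ℕ} (hT : Set.InjOn Nat.sqrt T) :
    Tendsto (fun n : ℕ => ((T ∩ Set.Iio n).ncard : ℝ) / n) atTop (nhds 0) :=
  squeeze_zero (fun n => by positivity)
    (fun n => div_le_div_of_nonneg_right (by exact_mod_cast ncard_inter_Iio_le_of_injOn_sqrt hT n)
      n.cast_nonneg) tendsto_nat_sqrt_add_one_div

theorem stmt_15_general (μ : Set ℕ → ℝ) (hμ : IsMeasure μ)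
    (hQ : IsQPlusMeasure μ) :
    (¬∃ ν : Set ℕ → ℝ, IsMeasure ν ∧ ShiftInvariant ν ∧ RBLe ν μ) ∧
    (¬∃ ν : Set ℕ → ℝ, IsMeasure ν ∧ ExtendsDensity ν ∧ RBLe ν μ) := by
  constructor
  · rintro ⟨ν, hν, hshift, hνμ⟩
    obtain ⟨T, hT, hpos⟩ := hνμ.exists_injOn_pos hμ hQ finToOne_sqrt
    exact hpos.ne' (hshift.measure_eq_zero_of_injOn_sqrt hν hT)
  · rintro ⟨ν, -, hdens, hνμ⟩
    obtain ⟨T, hT, hpos⟩ := hνμ.exists_injOn_pos hμ hQ finToOne_sqrt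
    exact hpos.ne' (hdens T 0 (tendsto_ncard_inter_Iio_div_of_injOn_sqrt hT))

/-- A free Q⁺-measure is neither nearly shift invariant nor RB-above a measure
extending the asymptotic density. -/
theorem stmt_15 (μ : Set ℕ → ℝ) (hμ : IsMeasure μ) (hfree : IsFree μ)
    (hQ : IsQPlusMeasure μ) :
    (¬∃ ν : Set ℕ → ℝ, IsMeasure ν ∧ ShiftInvariant ν ∧ RBLe ν μ) ∧
    (¬∃ ν : Set ℕ → ℝ, IsMeasure ν ∧ ExtendsDensity ν ∧ RBLe ν μ) :=
  stmt_15_general μ hμ hQ
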